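/- Fix τ₀ in the upper half plane ℍ. There exists a constant c > 0 such that |θ₁₁(z; τ₀)| ≥ c·|z| for all z in the closed fundamental parallelogram Λ := {z ∈ ℂ : |x(z)| ≤ 1/2 and |y(z)| ≤ 1/2}. -/

import Mathlib

/-!
For `π Im τ ≥ 2` the series pairs the terms `m` and `-m-1` into
`θ₁₁(w;τ) = ∑ₙ (-1)ⁿ⁺¹ 2 e^{πi(n+1/2)²τ} sin((2n+1)πw)`, and on the strip `|Im w| ≤ Im τ / 2`
the first term dominates the rest, so `|θ₁₁(w;τ)| ≥ ½ e^{-π Im τ/4} |sin πw|`. Translating a zero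
into that strip by quasi-periodicity shows that the zeros of `θ₁₁(·;τ)` lie in `ℤτ + ℤ`, and
comparison with `sin πz` shows `z = O(θ₁₁(z;τ))` at `0`. Both properties survive `τ ↦ τ + 1` and,
by the Jacobi transformation formula, `τ ↦ -1/τ`; since every `τ ∈ ℍ` is moved into the standard
fundamental domain of `SL(2,ℤ)`, where `Im τ ≥ √3/2`, they hold for all `τ ∈ ℍ`. On the compact
parallelogram the only zero is then `0`, and compactness upgrades the bound at `0` to a global one.
-/

open Filter Topology

noncomputable section

/-- The elliptic theta function
`θ₁₁(z;τ) = ∑_{m ∈ ℤ} exp(π√-1((m+1/2)²τ + 2(m+1/2)(z+1/2)))`. -/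
def theta (z τ : ℂ) : ℂ :=
  ∑' m : ℤ, Complex.exp ((Real.pi : ℂ) * Complex.I *
    (((m : ℂ) + 1 / 2) ^ 2 * τ + 2 * ((m : ℂ) + 1 / 2) * (z + 1 / 2)))

open Complex Asymptotics
open scoped Real

lemma norm_cos_le_exp_abs_im (v : ℂ) : ‖cos v‖ ≤ rexp |v.im| := by
  have h₁ : ‖cexp (v * I)‖ ≤ rexp |v.im| := by
    simpa [Complex.norm_exp] using neg_le_abs v.im
  have h₂ : ‖cexp (-v * I)‖ ≤ rexp |v.im| := by
    simpa [Complex.norm_exp] using le_abs_self v.im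
  rw [Complex.cos, norm_div, Complex.norm_ofNat]
  linarith [norm_add_le (cexp (v * I)) (cexp (-v * I))]

lemma norm_sin_nat_mul_le (N : ℕ) (v : ℂ) :
    ‖sin (N * v)‖ ≤ N * rexp ((N - 1) * |v.im|) * ‖sin v‖ := by
  induction N with
  | zero => simp
  | succ n ih =>
    have hcos : ‖cos (n * v)‖ ≤ rexp (n * |v.im|) := by
      simpa [abs_mul] using norm_cos_le_exp_abs_im (n * v)
    have hexp : rexp ((n - 1) * |v.im|) * rexp |v.im| = rexp (n * |v.im|) := by
      rw [← Real.exp_add]; ring_nf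
    calc ‖sin (((n + 1 : ℕ) : ℂ) * v)‖
        = ‖sin (n * v) * cos v + cos (n * v) * sin v‖ := by
          push_cast; rw [add_mul, one_mul, sin_add]
      _ ≤ ‖sin (n * v)‖ * ‖cos v‖ + ‖cos (n * v)‖ * ‖sin v‖ := by
          simpa only [norm_mul] using norm_add_le (sin (n * v) * cos v) (cos (n * v) * sin v)
      _ ≤ n * rexp ((n - 1) * |v.im|) * ‖sin v‖ * rexp |v.im| + rexp (n * |v.im|) * ‖sin v‖ := by
          gcongr
          exact norm_cos_le_exp_abs_im v
      _ = ((n + 1 : ℕ) : ℝ) * rexp ((((n + 1 : ℕ) : ℝ) - 1) * |v.im|) * ‖sin v‖ := by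
          push_cast; rw [add_sub_cancel_right, ← hexp]; ring

lemma isBigO_id_sin_pi_mul : (fun z : ℂ ↦ z) =O[𝓝 0] (fun z ↦ sin (π * z)) := by
  have hd : HasDerivAt (fun z ↦ sin (π * z)) π 0 := by
    simpa using ((hasDerivAt_id (0 : ℂ)).const_mul (π : ℂ)).csin
  have h := (hd.isTheta_sub (ofReal_ne_zero.mpr Real.pi_ne_zero)).isBigO_symm.comp_tendsto
    (tendsto_id.prodMk (tendsto_const_pure (b := (0 : ℂ))))
  simpa [Function.comp_def] using h

lemma exists_pos_mul_norm_le_norm_of_isCompact {E F : Type*} [NormedAddCommGroup E]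
    [NormedAddCommGroup F] {K : Set E} {f : E → F} (hK : IsCompact K) (hf : ContinuousOn f K)
    (hzero : ∀ z ∈ K, f z = 0 → z = 0) (hO : (fun z ↦ z) =O[𝓝 0] f) :
    ∃ c > 0, ∀ z ∈ K, c * ‖z‖ ≤ ‖f z‖ := by
  obtain ⟨C, hC, hCf⟩ := hO.exists_pos
  obtain ⟨ρ, hρ, hnear⟩ := Metric.eventually_nhds_iff.mp hCf.bound
  have hfar : IsCompact (K ∩ {z | ρ ≤ ‖z‖}) :=
    hK.inter_right (isClosed_le continuous_const continuous_norm)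
  have hne {z : E} (hz : z ∈ K ∩ {z | ρ ≤ ‖z‖}) : z ≠ 0 := norm_pos_iff.mp (hρ.trans_le hz.2)
  obtain ⟨m, hm, hmf⟩ := hfar.exists_forall_le' (f := fun z ↦ ‖f z‖ / ‖z‖)
    ((hf.mono Set.inter_subset_left).norm.div continuous_norm.continuousOn
      fun z hz ↦ norm_ne_zero_iff.mpr (hne hz))
    fun z hz ↦ div_pos (norm_pos_iff.mpr fun h ↦ hne hz (hzero z hz.1 h))
      (norm_pos_iff.mpr (hne hz))
  refine ⟨min C⁻¹ m, lt_min (inv_pos.mpr hC) hm, fun z hz ↦ ?_⟩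
  rcases lt_or_ge ‖z‖ ρ with h | h
  · have := hnear (by simpa using h)
    calc min C⁻¹ m * ‖z‖ ≤ C⁻¹ * ‖z‖ := by gcongr; exact min_le_left _ _
      _ ≤ ‖f z‖ := by rw [inv_mul_le_iff₀ hC]; exact this
  · have := hmf z ⟨hz, h⟩
    rw [le_div_iff₀ (hρ.trans_le h)] at this
    calc min C⁻¹ m * ‖z‖ ≤ m * ‖z‖ := by gcongr; exact min_le_right _ _
      _ ≤ ‖f z‖ := this

lemma eq_zero_of_eq_intCast_mul_add_intCast {τ : ℂ} (hτ : τ.im ≠ 0) {x y : ℝ} (hx : |x| < 1)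
    (hy : |y| < 1) {m n : ℤ} (h : (x : ℂ) * τ + y = m * τ + n) : (x : ℂ) * τ + y = 0 := by
  have hxm : x = m := mul_right_cancel₀ hτ (by simpa using congrArg im h)
  have hyn : y = n := by simpa [hxm] using congrArg re h
  rw [hxm] at hx; rw [hyn] at hy
  have hm : m = 0 := Int.abs_lt_one_iff.mp (by exact_mod_cast hx)
  have hn : n = 0 := Int.abs_lt_one_iff.mp (by exact_mod_cast hy)
  simp [hxm, hyn, hm, hn]

open UpperHalfPlane ModularGroup MatrixGroups in
lemma ModularGroup.smul_iff_of_S_of_T {P : ℍ → Prop} (hS : ∀ τ, P (S • τ) ↔ P τ)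
    (hT : ∀ τ, P (T • τ) ↔ P τ) (g : SL(2, ℤ)) (τ : ℍ) : P (g • τ) ↔ P τ := by
  have hg : g ∈ Subgroup.closure {S, T} := by simp [SpecialLinearGroup.SL2Z_generators]
  induction hg using Subgroup.closure_induction generalizing τ with
  | one => rw [one_smul]
  | mem g hg =>
    rcases hg with rfl | rfl
    exacts [hS τ, hT τ]
  | mul g h _ _ ihg ihh => rw [mul_smul]; exact (ihg _).trans (ihh τ)
  | inv g _ ih => simpa using (ih (g⁻¹ • τ)).symm

def thetaTerm (m : ℤ) (z τ : ℂ) : ℂ :=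
  cexp (π * I * ((m + 1 / 2) ^ 2 * τ + 2 * (m + 1 / 2) * (z + 1 / 2)))

lemma theta_eq_tsum (z τ : ℂ) : theta z τ = ∑' m : ℤ, thetaTerm m z τ := rfl

lemma thetaTerm_eq_exp_mul_jacobiTheta₂_term (m : ℤ) (z τ : ℂ) :
    thetaTerm m z τ =
      cexp (π * I * (z + 1 / 2 + τ / 4)) * jacobiTheta₂_term m (z + 1 / 2 + τ / 2) τ := by
  rw [thetaTerm, jacobiTheta₂_term, ← Complex.exp_add]
  ring_nf

lemma theta_eq_exp_mul_jacobiTheta₂ (z τ : ℂ) :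
    theta z τ = cexp (π * I * (z + 1 / 2 + τ / 4)) * jacobiTheta₂ (z + 1 / 2 + τ / 2) τ := by
  simp_rw [theta_eq_tsum, thetaTerm_eq_exp_mul_jacobiTheta₂_term, jacobiTheta₂, tsum_mul_left]

lemma hasSum_thetaTerm {τ : ℂ} (hτ : 0 < τ.im) (z : ℂ) :
    HasSum (thetaTerm · z τ) (theta z τ) := by
  simp_rw [thetaTerm_eq_exp_mul_jacobiTheta₂_term, theta_eq_exp_mul_jacobiTheta₂]
  exact (hasSum_jacobiTheta₂_term _ hτ).mul_left _

lemma continuous_theta {τ : ℂ} (hτ : 0 < τ.im) : Continuous (theta · τ) := by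
  simp_rw [continuous_iff_continuousAt, theta_eq_exp_mul_jacobiTheta₂]
  refine fun z ↦ ContinuousAt.mul (by fun_prop) ?_
  exact (continuousAt_jacobiTheta₂ _ hτ).comp (f := fun w ↦ (w + 1 / 2 + τ / 2, τ)) (by fun_prop)

lemma theta_add_intCast_mul (k : ℤ) (z τ : ℂ) :
    theta (z + k * τ) τ = cexp (-π * I * (k ^ 2 * τ + 2 * k * z + k)) * theta z τ := by
  rw [theta_eq_tsum, theta_eq_tsum, ← tsum_mul_left]
  conv_rhs => rw [← (Equiv.addRight k).tsum_eq]
  refine tsum_congr fun m ↦ ?_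
  rw [Equiv.coe_addRight, thetaTerm, thetaTerm, ← Complex.exp_add]
  push_cast
  ring_nf

lemma theta_add_one_right (z τ : ℂ) : theta z (τ + 1) = cexp (π * I / 4) * theta z τ := by
  rw [theta_eq_tsum, theta_eq_tsum, ← tsum_mul_left]
  refine tsum_congr fun m ↦ ?_
  obtain ⟨k, hk⟩ : Even (m * (m + 1)) := Int.even_mul_succ_self m
  have hk' : (m * (m + 1) : ℂ) = k + k := by exact_mod_cast hk
  rw [thetaTerm, thetaTerm, ← Complex.exp_add, Complex.exp_eq_exp_iff_exists_int]
  exact ⟨k, by linear_combination (π * I) * hk'⟩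

lemma theta_neg_inv {τ : ℂ} (hτ : τ ≠ 0) (z : ℂ) :
    theta z τ =
      I / (-I * τ) ^ (1 / 2 : ℂ) * cexp (-π * I * z ^ 2 / τ) * theta (z / τ) (-1 / τ) := by
  -- The functional equation of `jacobiTheta₂` lands one period `-1/τ` away from the point
  -- belonging to `theta (z / τ) (-1 / τ)`; quasi-periodicity moves it back.
  have hshift : (z + 1 / 2 + τ / 2) / τ = (z / τ + 1 / 2 + -1 / τ / 2) - -1 / τ := by
    field_simp; ring
  have hquasi := jacobiTheta₂_add_left' ((z + 1 / 2 + τ / 2) / τ) (-1 / τ)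
  rw [hshift, sub_add_cancel] at hquasi
  rw [theta_eq_exp_mul_jacobiTheta₂, jacobiTheta₂_functional_equation,
    theta_eq_exp_mul_jacobiTheta₂, hshift, hquasi]
  have key : cexp (π * I * (z + 1 / 2 + τ / 4)) * cexp (-π * I * (z + 1 / 2 + τ / 2) ^ 2 / τ) =
      cexp (π / 2 * I) * cexp (-π * I * z ^ 2 / τ) * cexp (π * I * (z / τ + 1 / 2 + -1 / τ / 4)) *
        cexp (-π * I * (-1 / τ + 2 * (z / τ + 1 / 2 + -1 / τ / 2 - -1 / τ))) := by
    simp only [← Complex.exp_add]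
    congr 1
    field_simp
    ring
  rw [Complex.exp_pi_div_two_mul_I] at key
  linear_combination (jacobiTheta₂ (z / τ + 1 / 2 + -1 / τ / 2 - -1 / τ) (-1 / τ) /
    (-I * τ) ^ (1 / 2 : ℂ)) * key

def thetaSinTerm (n : ℕ) (w τ : ℂ) : ℂ :=
  (-1) ^ (n + 1) * 2 * cexp (π * I * (n + 1 / 2) ^ 2 * τ) * sin ((2 * n + 1 : ℕ) * (π * w))

lemma thetaTerm_add_thetaTerm_neg (n : ℕ) (w τ : ℂ) :
    thetaTerm n w τ + thetaTerm (-(n + 1)) w τ = thetaSinTerm n w τ := by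
  set b : ℂ := (2 * n + 1 : ℕ) * (π * w) + n * π + π / 2 with hb_def
  have h₁ : thetaTerm n w τ = cexp (π * I * (n + 1 / 2) ^ 2 * τ) * cexp (b * I) := by
    rw [thetaTerm, ← Complex.exp_add, hb_def]; push_cast; ring_nf
  have h₂ : thetaTerm (-(n + 1)) w τ = cexp (π * I * (n + 1 / 2) ^ 2 * τ) * cexp (-b * I) := by
    rw [thetaTerm, ← Complex.exp_add, hb_def]; push_cast; ring_nf
  have hb : cos b = (-1) ^ (n + 1) * sin ((2 * n + 1 : ℕ) * (π * w)) := by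
    rw [cos_add_pi_div_two, Complex.sin_antiperiodic.add_nat_mul_eq]; ring
  rw [h₁, h₂, ← mul_add, ← two_cos, hb, thetaSinTerm]
  ring

lemma hasSum_thetaSinTerm {τ : ℂ} (hτ : 0 < τ.im) (w : ℂ) :
    HasSum (thetaSinTerm · w τ) (theta w τ) := by
  simpa only [← thetaTerm_add_thetaTerm_neg, Int.cast_natCast]
    using (hasSum_thetaTerm hτ w).nat_add_neg_add_one

lemma norm_thetaSinTerm (n : ℕ) (w τ : ℂ) :
    ‖thetaSinTerm n w τ‖ =
      2 * rexp (-π * τ.im * (n + 1 / 2) ^ 2) * ‖sin ((2 * n + 1 : ℕ) * (π * w))‖ := by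
  have hre : (π * I * (n + 1 / 2) ^ 2 * τ).re = -π * τ.im * (n + 1 / 2) ^ 2 := by
    simp [sq]; ring
  rw [thetaSinTerm, norm_mul, norm_mul, norm_mul, Complex.norm_exp, hre]
  simp

lemma norm_thetaSinTerm_le {w τ : ℂ} (hw : |w.im| ≤ τ.im / 2) (n : ℕ) :
    ‖thetaSinTerm n w τ‖ ≤
      2 * rexp (-π * τ.im / 4) * ‖sin (π * w)‖ * (3 * rexp (-π * τ.im)) ^ n := by
  have hτ : 0 ≤ τ.im := by linarith [abs_nonneg w.im]
  have hsin := norm_sin_nat_mul_le (2 * n + 1) (π * w)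
  rw [show |(π * w).im| = π * |w.im| by simp [abs_mul, abs_of_pos Real.pi_pos]] at hsin
  have hn : (n : ℝ) ≤ n ^ 2 := by exact_mod_cast Nat.le_self_pow two_ne_zero n
  -- the Gaussian factor absorbs the growth `e^{2nπ|Im w|} ≤ e^{nπ Im τ}` of the sine
  have hexp : rexp (-π * τ.im * (n + 1 / 2) ^ 2) * rexp (((2 * n + 1 : ℕ) - 1) * (π * |w.im|)) ≤
      rexp (-π * τ.im / 4) * rexp (-π * τ.im) ^ n := by
    rw [← Real.exp_nat_mul, ← Real.exp_add, ← Real.exp_add, Real.exp_le_exp]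
    push_cast
    nlinarith [mul_le_mul_of_nonneg_left hw (by positivity : (0 : ℝ) ≤ 2 * n * π),
      mul_le_mul_of_nonneg_left hn (by positivity : (0 : ℝ) ≤ π * τ.im)]
  have h3 : ((2 * n + 1 : ℕ) : ℝ) ≤ 3 ^ n := by
    have := one_add_mul_le_pow (by norm_num : (-2 : ℝ) ≤ 2) n
    push_cast; norm_num at this; linarith
  calc ‖thetaSinTerm n w τ‖
      = 2 * rexp (-π * τ.im * (n + 1 / 2) ^ 2) * ‖sin ((2 * n + 1 : ℕ) * (π * w))‖ :=
        norm_thetaSinTerm n w τ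
    _ ≤ 2 * rexp (-π * τ.im * (n + 1 / 2) ^ 2) *
        ((2 * n + 1 : ℕ) * rexp (((2 * n + 1 : ℕ) - 1) * (π * |w.im|)) * ‖sin (π * w)‖) := by
        gcongr
    _ = 2 * (2 * n + 1 : ℕ) * (rexp (-π * τ.im * (n + 1 / 2) ^ 2) *
        rexp (((2 * n + 1 : ℕ) - 1) * (π * |w.im|))) * ‖sin (π * w)‖ := by ring
    _ ≤ 2 * 3 ^ n * (rexp (-π * τ.im / 4) * rexp (-π * τ.im) ^ n) * ‖sin (π * w)‖ := by
        gcongr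
    _ = 2 * rexp (-π * τ.im / 4) * ‖sin (π * w)‖ * (3 * rexp (-π * τ.im)) ^ n := by
        rw [mul_pow]; ring

lemma norm_sin_mul_le_norm_theta {τ w : ℂ} (hτ : 2 ≤ π * τ.im) (hw : |w.im| ≤ τ.im / 2) :
    rexp (-π * τ.im / 4) / 2 * ‖sin (π * w)‖ ≤ ‖theta w τ‖ := by
  set x := rexp (-π * τ.im)
  set C := 2 * rexp (-π * τ.im / 4) * ‖sin (π * w)‖
  have hx : 0 ≤ 3 * x := by positivity
  -- `x ≤ 1/7` makes the tail `∑ₙ C (3x)ⁿ⁺¹ = C · 3x/(1 - 3x)` at most `3/4` of the first term.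
  have hx7 : x ≤ 1 / 7 := by
    have h7 : 7 ≤ rexp 2 := by
      rw [show (2 : ℝ) = 1 + 1 by norm_num, Real.exp_add]; nlinarith [Real.exp_one_gt_d9]
    calc x ≤ rexp (-2) := Real.exp_le_exp.mpr (by linarith)
      _ ≤ 1 / 7 := by rw [Real.exp_neg, one_div]; exact inv_anti₀ (by norm_num) h7
  have hhead : ‖thetaSinTerm 0 w τ‖ = C := by
    rw [norm_thetaSinTerm, show -π * τ.im * (((0 : ℕ) : ℝ) + 1 / 2) ^ 2 = -π * τ.im / 4 by ring]
    simp [C]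
  have htail : HasSum (fun n ↦ thetaSinTerm (n + 1) w τ) (theta w τ - thetaSinTerm 0 w τ) := by
    simpa using (hasSum_nat_add_iff' 1).mpr (hasSum_thetaSinTerm (by nlinarith [Real.pi_pos]) w)
  have hgeom : HasSum (fun n ↦ C * (3 * x) ^ (n + 1)) (C * (3 * x / (1 - 3 * x))) := by
    simpa [pow_succ, mul_assoc, mul_comm, mul_left_comm, div_eq_mul_inv] using
      (hasSum_geometric_of_lt_one hx (by linarith)).mul_left (C * (3 * x))
  have hbound := htail.norm_le_of_bounded hgeom fun n ↦ norm_thetaSinTerm_le hw (n + 1)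
  have hratio : 3 * x / (1 - 3 * x) ≤ 3 / 4 := by
    rw [div_le_iff₀ (by linarith)]; linarith
  have hC : 0 ≤ C := by positivity
  nlinarith [norm_sub_norm_le (thetaSinTerm 0 w τ) (theta w τ),
    norm_sub_rev (thetaSinTerm 0 w τ) (theta w τ)]

lemma exists_eq_of_theta_eq_zero {τ w : ℂ} (hτ : 2 ≤ π * τ.im) (h : theta w τ = 0) :
    ∃ m n : ℤ, w = m * τ + n := by
  have him : 0 < τ.im := by nlinarith [Real.pi_pos]
  set m := round (w.im / τ.im)
  have hw' : |(w - m * τ).im| ≤ τ.im / 2 := by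
    have := abs_sub_round (w.im / τ.im)
    rw [show (w - m * τ).im = (w.im / τ.im - m) * τ.im by simp; field_simp, abs_mul,
      abs_of_pos him]
    nlinarith
  have h' : theta (w - m * τ) τ = 0 := by
    have := theta_add_intCast_mul m (w - m * τ) τ
    rw [sub_add_cancel, h] at this
    exact (mul_eq_zero.mp this.symm).resolve_left (Complex.exp_ne_zero _)
  have hsin : sin (π * (w - m * τ)) = 0 := by
    have := norm_sin_mul_le_norm_theta hτ hw'
    rw [h', norm_zero] at this
    exact norm_le_zero_iff.mp (nonpos_of_mul_nonpos_right this (by positivity))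
  obtain ⟨n, hn⟩ := Complex.sin_eq_zero_iff.mp hsin
  have hπ : (π : ℂ) ≠ 0 := ofReal_ne_zero.mpr Real.pi_ne_zero
  exact ⟨m, n, by linear_combination mul_left_cancel₀ hπ (hn.trans (mul_comm _ _))⟩

lemma isBigO_theta_of_two_le {τ : ℂ} (hτ : 2 ≤ π * τ.im) :
    (fun z : ℂ ↦ z) =O[𝓝 0] (theta · τ) := by
  have hnear : ∀ᶠ z : ℂ in 𝓝 0, |z.im| ≤ τ.im / 2 := by
    refine ((by fun_prop : Continuous fun z : ℂ ↦ |z.im|).tendsto 0).eventually_le_const ?_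
    simpa using half_pos (by nlinarith [Real.pi_pos] : 0 < τ.im)
  refine isBigO_id_sin_pi_mul.trans (IsBigO.of_bound (2 / rexp (-π * τ.im / 4)) ?_)
  filter_upwards [hnear] with z hz
  rw [div_mul_eq_mul_div, le_div_iff₀ (by positivity)]
  linarith [norm_sin_mul_le_norm_theta hτ hz]

def ThetaZerosInLattice (τ : ℂ) : Prop :=
  (∀ z, theta z τ = 0 → ∃ m n : ℤ, z = m * τ + n) ∧ (fun z : ℂ ↦ z) =O[𝓝 0] (theta · τ)

lemma ThetaZerosInLattice.of_two_le {τ : ℂ} (hτ : 2 ≤ π * τ.im) : ThetaZerosInLattice τ :=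
  ⟨fun _ ↦ exists_eq_of_theta_eq_zero hτ, isBigO_theta_of_two_le hτ⟩

lemma thetaZerosInLattice_add_one_iff (τ : ℂ) :
    ThetaZerosInLattice (τ + 1) ↔ ThetaZerosInLattice τ := by
  have hlat (z : ℂ) : (∃ m n : ℤ, z = m * (τ + 1) + n) ↔ ∃ m n : ℤ, z = m * τ + n := by
    constructor
    · rintro ⟨m, n, rfl⟩; exact ⟨m, m + n, by push_cast; ring⟩
    · rintro ⟨m, n, rfl⟩; exact ⟨m, n - m, by push_cast; ring⟩
  simp only [ThetaZerosInLattice, theta_add_one_right, mul_eq_zero, Complex.exp_ne_zero, false_or,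
    hlat, isBigO_const_mul_right_iff (Complex.exp_ne_zero _)]

lemma ThetaZerosInLattice.of_neg_inv {τ : ℂ} (hτ : τ ≠ 0) (h : ThetaZerosInLattice (-1 / τ)) :
    ThetaZerosInLattice τ := by
  obtain ⟨hzero, hO⟩ := h
  set u : ℂ → ℂ := fun z ↦ I / (-I * τ) ^ (1 / 2 : ℂ) * cexp (-π * I * z ^ 2 / τ)
  have hu (z : ℂ) : u z ≠ 0 :=
    mul_ne_zero (div_ne_zero I_ne_zero ((cpow_ne_zero_iff_of_exponent_ne_zero (by norm_num)).mpr
      (mul_ne_zero (neg_ne_zero.mpr I_ne_zero) hτ))) (Complex.exp_ne_zero _)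
  have hθ (z : ℂ) : theta z τ = u z * theta (z / τ) (-1 / τ) := theta_neg_inv hτ z
  refine ⟨fun z hz ↦ ?_, ?_⟩
  · obtain ⟨m, n, h⟩ := hzero (z / τ) ((mul_eq_zero.mp (hθ z ▸ hz)).resolve_left (hu z))
    refine ⟨n, -m, ?_⟩
    field_simp at h
    push_cast
    linear_combination h
  · have h₁ : (fun z : ℂ ↦ z) =O[𝓝 0] (fun z ↦ z / τ) := by
      simpa [div_eq_inv_mul] using isBigO_self_const_mul (inv_ne_zero hτ) (fun z : ℂ ↦ z) (𝓝 0)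
    have h₂ : (fun z ↦ z / τ) =O[𝓝 0] (fun z ↦ theta (z / τ) (-1 / τ)) :=
      hO.comp_tendsto ((continuous_id.div_const τ).tendsto' 0 0 (zero_div τ))
    have h₃ : (fun z ↦ theta (z / τ) (-1 / τ)) =O[𝓝 0] (theta · τ) := by
      have hinv := (((by fun_prop : Continuous u).tendsto 0).inv₀ (hu 0)).isBigO_one ℂ
      simpa [hθ, hu, ← mul_assoc] using hinv.mul (isBigO_refl (theta · τ) (𝓝 0))
    exact h₁.trans (h₂.trans h₃)

open UpperHalfPlane ModularGroup MatrixGroups in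
lemma thetaZerosInLattice_of_im_pos {τ : ℂ} (hτ : 0 < τ.im) : ThetaZerosInLattice τ := by
  have hS (τ : ℍ) : ThetaZerosInLattice ↑(S • τ) ↔ ThetaZerosInLattice τ := by
    have hτ₀ : (τ : ℂ) ≠ 0 := τ.ne_zero
    rw [modular_S_smul, coe_mk, ← neg_inv, ← one_div, ← neg_div]
    exact ⟨.of_neg_inv hτ₀, fun h ↦ .of_neg_inv (by simpa using hτ₀) (by simpa using h)⟩
  have hT (τ : ℍ) : ThetaZerosInLattice ↑(T • τ) ↔ ThetaZerosInLattice τ := by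
    rw [modular_T_smul, coe_vadd, add_comm]; push_cast
    exact thetaZerosInLattice_add_one_iff τ
  obtain ⟨g, hg⟩ := exists_smul_mem_fd ⟨τ, hτ⟩
  have him := three_le_four_mul_im_sq_of_mem_fd hg
  refine (smul_iff_of_S_of_T (P := fun τ : ℍ ↦ ThetaZerosInLattice τ) hS hT g ⟨τ, hτ⟩).mp ?_
  exact .of_two_le (by rw [coe_im]; nlinarith [Real.pi_gt_three, (g • (⟨τ, hτ⟩ : ℍ)).im_pos])

/-- For `τ₀ ∈ ℍ` there is a constant `c > 0` with `|θ₁₁(z;τ₀)| ≥ c|z|` on the closed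
fundamental parallelogram `Λ = {xτ₀ + y : |x| ≤ 1/2, |y| ≤ 1/2}`. -/
theorem theta_abs_lower_bound_on_fundamental_domain (τ₀ : ℂ) (hτ₀ : 0 < τ₀.im) :
    ∃ c : ℝ, 0 < c ∧ ∀ (z : ℂ) (x y : ℝ), z = (x : ℂ) * τ₀ + (y : ℂ) →
      |x| ≤ 1 / 2 → |y| ≤ 1 / 2 → c * ‖z‖ ≤ ‖theta z τ₀‖ := by
  obtain ⟨hzero, hO⟩ := thetaZerosInLattice_of_im_pos hτ₀
  set Λ : Set ℂ := (fun p : ℝ × ℝ ↦ (p.1 : ℂ) * τ₀ + p.2) ''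
    (Set.Icc (-(1 / 2)) (1 / 2) ×ˢ Set.Icc (-(1 / 2)) (1 / 2))
  have hΛ : IsCompact Λ := (isCompact_Icc.prod isCompact_Icc).image (by fun_prop)
  have hΛzero : ∀ z ∈ Λ, theta z τ₀ = 0 → z = 0 := by
    rintro _ ⟨⟨x, y⟩, ⟨hx, hy⟩, rfl⟩ h
    obtain ⟨m, n, hmn⟩ := hzero _ h
    refine eq_zero_of_eq_intCast_mul_add_intCast hτ₀.ne' ?_ ?_ hmn
    · exact (abs_le.mpr hx).trans_lt (by norm_num)
    · exact (abs_le.mpr hy).trans_lt (by norm_num)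
  obtain ⟨c, hc, hcΛ⟩ :=
    exists_pos_mul_norm_le_norm_of_isCompact hΛ (continuous_theta hτ₀).continuousOn hΛzero hO
  exact ⟨c, hc, fun z x y hz hx hy ↦ hcΛ z ⟨(x, y), ⟨abs_le.mp hx, abs_le.mp hy⟩, hz.symm⟩⟩

end
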